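/- arXiv:2404.11790 — 6 statements merged into one kernel-verified Lean document; each statement's English description precedes it below -/
import Mathlib

section
/- Let L, G, ρ > 0 and ω ≥ (ρ/L)(G + ρ/2). For j = 1,…,J let g̃_j : ℝ^n → ℝ be L-smooth and G-Lipschitz, and for i = 1,…,I let h_i : ℝ^n → ℝ be L-smooth and G-Lipschitz. Suppose x_t ∈ ℝ^n satisfies g̃_j(x_t) ≤ 0 for all j and h_i(x_t) ≤ 0 for all i, and suppose there exists d ∈ ℝ^n with ‖d‖ = 1 such that ⟨∇g̃_j(x_t), d⟩ ≤ −ρ for every j with g̃_j(x_t) ≥ −ω, and ⟨∇h_i(x_t), d⟩ ≤ −ρ for every i with h_i(x_t) ≥ −ω. Then the point x̃ := x_t + (ρ/L)·d satisfies g̃_j(x̃) ≤ −ρ²/(2L) for all j = 1,…,J and h_i(x̃) ≤ −ρ²/(2L) for all i = 1,…,I. (Existence of a Slater point for the SCA subproblem under strong (ω,ρ)-MFCQ, Lemma 5 of the paper.) -/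
/-!
A constraint that is near-active at `x` (value at least `-ω`) decreases along `d` with slope at
most `-ρ`, so by the descent lemma a step of length `ρ / L` brings it from a nonpositive value down
by at least `ρ² / L - ρ² / (2L) = ρ² / (2L)`. Any other constraint starts below `-ω` and, being
`G`-Lipschitz, rises by at most `Gρ / L`; the lower bound on `ω` is exactly what keeps it below
`-ρ² / (2L)`.
-/

open RealInnerProductSpace Gradient

section

variable {E : Type*} [NormedAddCommGroup E] [InnerProductSpace ℝ E] [CompleteSpace E]
  {f : E → ℝ} {L : ℝ}

theorem hasDerivAt_apply_add_smul {x v : E} {t : ℝ} (hf : DifferentiableAt ℝ f (x + t • v)) :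
    HasDerivAt (fun s : ℝ => f (x + s • v)) ⟪∇ f (x + t • v), v⟫ t := by
  have hline : HasDerivAt (fun s : ℝ => x + s • v) v t := by
    simpa using ((hasDerivAt_id t).smul_const v).const_add x
  exact hf.hasGradientAt.hasFDerivAt.comp_hasDerivAt t hline

theorem inner_gradient_add_smul_sub_le
    (hsm : ∀ x y, ‖∇ f x - ∇ f y‖ ≤ L * ‖x - y‖) (x v : E) {t : ℝ} (ht : 0 ≤ t) :
    ⟪∇ f (x + t • v), v⟫ - ⟪∇ f x, v⟫ ≤ L * t * ‖v‖ ^ 2 := by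
  calc ⟪∇ f (x + t • v), v⟫ - ⟪∇ f x, v⟫ = ⟪∇ f (x + t • v) - ∇ f x, v⟫ :=
        (inner_sub_left ..).symm
    _ ≤ ‖∇ f (x + t • v) - ∇ f x‖ * ‖v‖ := real_inner_le_norm _ _
    _ ≤ L * ‖(x + t • v) - x‖ * ‖v‖ := by gcongr; exact hsm _ _
    _ = L * t * ‖v‖ ^ 2 := by
      rw [add_sub_cancel_left, norm_smul, Real.norm_of_nonneg ht]; ring

theorem apply_add_smul_le_of_lipschitz_gradient (hf : Differentiable ℝ f)
    (hsm : ∀ x y, ‖∇ f x - ∇ f y‖ ≤ L * ‖x - y‖) (x v : E) {s : ℝ} (hs : 0 ≤ s) :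
    f (x + s • v) ≤ f x + s * ⟪∇ f x, v⟫ + L * s ^ 2 / 2 * ‖v‖ ^ 2 := by
  set φ : ℝ → ℝ := fun t => f (x + t • v) - t * ⟪∇ f x, v⟫ - L * t ^ 2 / 2 * ‖v‖ ^ 2
  have hφ' : ∀ t, HasDerivAt φ (⟪∇ f (x + t • v), v⟫ - ⟪∇ f x, v⟫ - L * t * ‖v‖ ^ 2) t := by
    intro t
    have hq : HasDerivAt (fun t : ℝ => L * t ^ 2 / 2 * ‖v‖ ^ 2) (L * t * ‖v‖ ^ 2) t := by
      refine (((hasDerivAt_pow 2 t).const_mul L).div_const 2).mul_const _ |>.congr_deriv ?_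
      push_cast; ring
    exact ((hasDerivAt_apply_add_smul (hf _)).sub ((hasDerivAt_id t).mul_const _)).sub hq
      |>.congr_deriv (by simp)
  have hanti : AntitoneOn φ (Set.Ici 0) := by
    refine antitoneOn_of_hasDerivWithinAt_nonpos (convex_Ici 0)
      (fun t _ => (hφ' t).continuousAt.continuousWithinAt)
      (fun t _ => (hφ' t).hasDerivWithinAt) fun t ht => ?_
    rw [interior_Ici] at ht
    linarith [inner_gradient_add_smul_sub_le hsm x v (le_of_lt ht)]
  have hφs := hanti Set.self_mem_Ici hs hs
  simp only [φ, zero_smul, add_zero, zero_mul, sub_zero, zero_pow two_ne_zero, mul_zero,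
    zero_div] at hφs
  linarith

theorem apply_add_smul_le_of_strongMFCQ {G ρ ω : ℝ} (hL : 0 < L) (hρ : 0 < ρ)
    (hω : ρ / L * (G + ρ / 2) ≤ ω) (hf : Differentiable ℝ f)
    (hsm : ∀ x y, ‖∇ f x - ∇ f y‖ ≤ L * ‖x - y‖) (hlip : ∀ x y, |f x - f y| ≤ G * ‖x - y‖)
    {x d : E} (hfeas : f x ≤ 0) (hd : ‖d‖ = 1) (hmfcq : -ω ≤ f x → ⟪∇ f x, d⟫ ≤ -ρ) :
    f (x + (ρ / L) • d) ≤ -ρ ^ 2 / (2 * L) := by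
  have hs : 0 ≤ ρ / L := by positivity
  rcases le_or_gt (-ω) (f x) with hnear | hfar
  · have hdescent := apply_add_smul_le_of_lipschitz_gradient hf hsm x d hs
    have hslope := mul_le_mul_of_nonneg_left (hmfcq hnear) hs
    have hvalue : ρ / L * -ρ + L * (ρ / L) ^ 2 / 2 = -ρ ^ 2 / (2 * L) := by
      field_simp; ring
    rw [hd, one_pow, mul_one] at hdescent
    linarith
  · have hlip_step : f (x + (ρ / L) • d) ≤ f x + G * (ρ / L) := by
      have hstep := hlip (x + (ρ / L) • d) x
      rw [add_sub_cancel_left, norm_smul, hd, mul_one, Real.norm_of_nonneg hs] at hstep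
      linarith [le_abs_self (f (x + (ρ / L) • d) - f x)]
    have hvalue : ρ / L * (G + ρ / 2) = G * (ρ / L) + ρ ^ 2 / (2 * L) := by
      field_simp
    linarith [neg_div (2 * L) (ρ ^ 2)]

end

theorem slater_point_exists_general {n J I : ℕ} (L G ρ ω : ℝ)
    (hL : 0 < L) (hρ : 0 < ρ)
    (hω : ω ≥ (ρ / L) * (G + ρ / 2))
    (gtil : Fin J → EuclideanSpace ℝ (Fin n) → ℝ)
    (h : Fin I → EuclideanSpace ℝ (Fin n) → ℝ)
    (hg_diff : ∀ j, Differentiable ℝ (gtil j))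
    (hg_smooth : ∀ j x y, ‖gradient (gtil j) x - gradient (gtil j) y‖ ≤ L * ‖x - y‖)
    (hg_lip : ∀ j x y, |gtil j x - gtil j y| ≤ G * ‖x - y‖)
    (hh_diff : ∀ i, Differentiable ℝ (h i))
    (hh_smooth : ∀ i x y, ‖gradient (h i) x - gradient (h i) y‖ ≤ L * ‖x - y‖)
    (hh_lip : ∀ i x y, |h i x - h i y| ≤ G * ‖x - y‖)
    (xt : EuclideanSpace ℝ (Fin n))
    (hfeas_g : ∀ j, gtil j xt ≤ 0) (hfeas_h : ∀ i, h i xt ≤ 0)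
    (d : EuclideanSpace ℝ (Fin n)) (hd : ‖d‖ = 1)
    (hmfcq_g : ∀ j, gtil j xt ≥ -ω → ⟪gradient (gtil j) xt, d⟫ ≤ -ρ)
    (hmfcq_h : ∀ i, h i xt ≥ -ω → ⟪gradient (h i) xt, d⟫ ≤ -ρ) :
    (∀ j, gtil j (xt + (ρ / L) • d) ≤ -ρ ^ 2 / (2 * L)) ∧
      (∀ i, h i (xt + (ρ / L) • d) ≤ -ρ ^ 2 / (2 * L)) :=
  ⟨fun j => apply_add_smul_le_of_strongMFCQ hL hρ hω (hg_diff j) (hg_smooth j) (hg_lip j)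
      (hfeas_g j) hd (hmfcq_g j),
    fun i => apply_add_smul_le_of_strongMFCQ hL hρ hω (hh_diff i) (hh_smooth i) (hh_lip i)
      (hfeas_h i) hd (hmfcq_h i)⟩

/-- Existence of a Slater point for the SCA subproblem under strong (ω,ρ)-MFCQ (Lemma 5). -/
theorem slater_point_exists {n J I : ℕ} (L G ρ ω : ℝ)
    (hL : 0 < L) (hG : 0 < G) (hρ : 0 < ρ)
    (hω : ω ≥ (ρ / L) * (G + ρ / 2))
    (gtil : Fin J → EuclideanSpace ℝ (Fin n) → ℝ)
    (h : Fin I → EuclideanSpace ℝ (Fin n) → ℝ)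
    (hg_diff : ∀ j, Differentiable ℝ (gtil j))
    (hg_smooth : ∀ j x y, ‖gradient (gtil j) x - gradient (gtil j) y‖ ≤ L * ‖x - y‖)
    (hg_lip : ∀ j x y, |gtil j x - gtil j y| ≤ G * ‖x - y‖)
    (hh_diff : ∀ i, Differentiable ℝ (h i))
    (hh_smooth : ∀ i x y, ‖gradient (h i) x - gradient (h i) y‖ ≤ L * ‖x - y‖)
    (hh_lip : ∀ i x y, |h i x - h i y| ≤ G * ‖x - y‖)
    (xt : EuclideanSpace ℝ (Fin n))
    (hfeas_g : ∀ j, gtil j xt ≤ 0) (hfeas_h : ∀ i, h i xt ≤ 0)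
    (d : EuclideanSpace ℝ (Fin n)) (hd : ‖d‖ = 1)
    (hmfcq_g : ∀ j, gtil j xt ≥ -ω → ⟪gradient (gtil j) xt, d⟫ ≤ -ρ)
    (hmfcq_h : ∀ i, h i xt ≥ -ω → ⟪gradient (h i) xt, d⟫ ≤ -ρ) :
    (∀ j, gtil j (xt + (ρ / L) • d) ≤ -ρ ^ 2 / (2 * L)) ∧
      (∀ i, h i (xt + (ρ / L) • d) ≤ -ρ ^ 2 / (2 * L)) :=
  slater_point_exists_general L G ρ ω hL hρ hω gtil h hg_diff hg_smooth hg_lip hh_diff hh_smooth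
    hh_lip xt hfeas_g hfeas_h d hd hmfcq_g hmfcq_h
end

section
/- Let L, ρ > 0 and B_U ≥ 0. Let F̃ : ℝ^n → ℝ be convex and differentiable, u : ℝ^n → ℝ be convex, and for j = 1,…,J and i = 1,…,I let g̃_j, h_i : ℝ^n → ℝ be convex and differentiable. Let x̂, x̃ ∈ ℝ^n, λ ∈ ℝ^J with λ_j ≥ 0, ν ∈ ℝ^I with ν_i ≥ 0, and v ∈ ℝ^n a subgradient of u at x̂, such that: (stationarity) ∇F̃(x̂) + v + Σ_j λ_j ∇g̃_j(x̂) + Σ_i ν_i ∇h_i(x̂) = 0; (complementary slackness) λ_j · g̃_j(x̂) = 0 for all j and ν_i · h_i(x̂) = 0 for all i; (Slater point) g̃_j(x̃) ≤ −ρ²/(2L) for all j and h_i(x̃) ≤ −ρ²/(2L) for all i; and (boundedness) F̃(x̃) + u(x̃) − (F̃(x̂) + u(x̂)) ≤ B_U. Then Σ_{j=1}^J λ_j + Σ_{i=1}^I ν_i ≤ 2·B_U·L/ρ². (Bound on the dual variables, Lemma 6 of the paper.) -/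
/-!
Pair the stationarity condition with the direction `x̃ - x̂`. By the gradient inequality for
`F̃` and the subgradient inequality for `u`, the objective part of the pairing is at most the
objective gap `≤ B_U`; by the gradient inequality for the constraints, complementary slackness
and the Slater margin, each multiplier contributes at most `-(ρ²/(2L))` times itself. Since the
pairing vanishes, `ρ²/(2L) · (∑ λ + ∑ ν) ≤ B_U`.
-/

open RealInnerProductSpace

theorem ConvexOn.hasFDerivAt_le_sub {E : Type*} [NormedAddCommGroup E] [NormedSpace ℝ E]
    {f : E → ℝ} {f' : E →L[ℝ] ℝ} {x : E} (hf : ConvexOn ℝ Set.univ f) (hf' : HasFDerivAt f f' x)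
    (y : E) : f' (y - x) ≤ f y - f x := by
  have hline : ConvexOn ℝ Set.univ (f ∘ AffineMap.lineMap (k := ℝ) x y) := by
    simpa using hf.comp_affineMap (AffineMap.lineMap (k := ℝ) x y)
  have hderiv : HasDerivAt (f ∘ AffineMap.lineMap (k := ℝ) x y) (f' (y - x)) 0 := by
    have hlineDeriv : HasDerivAt (AffineMap.lineMap x y : ℝ → E) (y - x) 0 :=
      AffineMap.hasDerivAt_lineMap
    simpa using hf'.comp_hasDerivAt_of_eq 0 hlineDeriv (by simp)
  simpa [slope_def_field] using
    hline.le_slope_of_hasDerivAt (Set.mem_univ 0) (Set.mem_univ 1) one_pos hderiv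

theorem ConvexOn.inner_gradient_le_sub {E : Type*} [NormedAddCommGroup E] [InnerProductSpace ℝ E]
    [CompleteSpace E] {f : E → ℝ} {x : E} (hf : ConvexOn ℝ Set.univ f)
    (hfx : DifferentiableAt ℝ f x) (y : E) : ⟪gradient f x, y - x⟫ ≤ f y - f x := by
  simpa using hf.hasFDerivAt_le_sub hfx.hasGradientAt.hasFDerivAt y

theorem sum_mul_inner_gradient_le_neg_mul_sum {E ι : Type*} [NormedAddCommGroup E]
    [InnerProductSpace ℝ E] [CompleteSpace E] [Fintype ι] {g : ι → E → ℝ} {μ : ι → ℝ} {x y : E}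
    {c : ℝ} (hg : ∀ k, ConvexOn ℝ Set.univ (g k)) (hgx : ∀ k, DifferentiableAt ℝ (g k) x)
    (hμ : ∀ k, 0 ≤ μ k) (hcs : ∀ k, μ k * g k x = 0) (hy : ∀ k, g k y ≤ -c) :
    ∑ k, μ k * ⟪gradient (g k) x, y - x⟫ ≤ -c * ∑ k, μ k := by
  rw [Finset.mul_sum]
  refine Finset.sum_le_sum fun k _ => ?_
  calc μ k * ⟪gradient (g k) x, y - x⟫ ≤ μ k * (g k y - g k x) :=
        mul_le_mul_of_nonneg_left ((hg k).inner_gradient_le_sub (hgx k) y) (hμ k)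
    _ = μ k * g k y := by rw [mul_sub, hcs k, sub_zero]
    _ ≤ μ k * -c := mul_le_mul_of_nonneg_left (hy k) (hμ k)
    _ = -c * μ k := mul_comm _ _

theorem dual_variable_bound_general {n J I : ℕ} (L ρ B_U : ℝ)
    (hL : 0 < L) (hρ : 0 < ρ)
    (Ftil u : EuclideanSpace ℝ (Fin n) → ℝ)
    (gtil : Fin J → EuclideanSpace ℝ (Fin n) → ℝ)
    (h : Fin I → EuclideanSpace ℝ (Fin n) → ℝ)
    (hF_conv : ConvexOn ℝ Set.univ Ftil) (hF_diff : Differentiable ℝ Ftil)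
    (hg_conv : ∀ j, ConvexOn ℝ Set.univ (gtil j))
    (hg_diff : ∀ j, Differentiable ℝ (gtil j))
    (hh_conv : ∀ i, ConvexOn ℝ Set.univ (h i))
    (hh_diff : ∀ i, Differentiable ℝ (h i))
    (xhat xtil : EuclideanSpace ℝ (Fin n))
    (lam : Fin J → ℝ) (hlam : ∀ j, 0 ≤ lam j)
    (nu : Fin I → ℝ) (hnu : ∀ i, 0 ≤ nu i)
    (v : EuclideanSpace ℝ (Fin n))
    (hv : ∀ y, u y ≥ u xhat + ⟪v, y - xhat⟫)
    (hstat : gradient Ftil xhat + v + ∑ j, lam j • gradient (gtil j) xhat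
        + ∑ i, nu i • gradient (h i) xhat = 0)
    (hcs_g : ∀ j, lam j * gtil j xhat = 0)
    (hcs_h : ∀ i, nu i * h i xhat = 0)
    (hslater_g : ∀ j, gtil j xtil ≤ -ρ ^ 2 / (2 * L))
    (hslater_h : ∀ i, h i xtil ≤ -ρ ^ 2 / (2 * L))
    (hbound : Ftil xtil + u xtil - (Ftil xhat + u xhat) ≤ B_U) :
    ∑ j, lam j + ∑ i, nu i ≤ 2 * B_U * L / ρ ^ 2 := by
  have hstat_dir : ⟪gradient Ftil xhat, xtil - xhat⟫ + ⟪v, xtil - xhat⟫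
      + ∑ j, lam j * ⟪gradient (gtil j) xhat, xtil - xhat⟫
      + ∑ i, nu i * ⟪gradient (h i) xhat, xtil - xhat⟫ = 0 := by
    simpa only [inner_add_left, sum_inner, real_inner_smul_left, inner_zero_left] using
      congrArg (⟪·, xtil - xhat⟫) hstat
  have hF := hF_conv.inner_gradient_le_sub (hF_diff xhat) xtil
  have hg := sum_mul_inner_gradient_le_neg_mul_sum hg_conv (fun j => hg_diff j xhat) hlam hcs_g
    fun j => (hslater_g j).trans_eq (neg_div _ _)
  have hh := sum_mul_inner_gradient_le_neg_mul_sum hh_conv (fun i => hh_diff i xhat) hnu hcs_h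
    fun i => (hslater_h i).trans_eq (neg_div _ _)
  have hmargin : ρ ^ 2 / (2 * L) * (∑ j, lam j + ∑ i, nu i) ≤ B_U := by
    linarith [hv xtil]
  rw [div_mul_eq_mul_div, div_le_iff₀ (by positivity)] at hmargin
  rw [le_div_iff₀ (by positivity)]
  linarith

/-- Bound on the dual variables (Lemma 6). -/
theorem dual_variable_bound {n J I : ℕ} (L ρ B_U : ℝ)
    (hL : 0 < L) (hρ : 0 < ρ) (hB : 0 ≤ B_U)
    (Ftil u : EuclideanSpace ℝ (Fin n) → ℝ)
    (gtil : Fin J → EuclideanSpace ℝ (Fin n) → ℝ)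
    (h : Fin I → EuclideanSpace ℝ (Fin n) → ℝ)
    (hF_conv : ConvexOn ℝ Set.univ Ftil) (hF_diff : Differentiable ℝ Ftil)
    (hu_conv : ConvexOn ℝ Set.univ u)
    (hg_conv : ∀ j, ConvexOn ℝ Set.univ (gtil j))
    (hg_diff : ∀ j, Differentiable ℝ (gtil j))
    (hh_conv : ∀ i, ConvexOn ℝ Set.univ (h i))
    (hh_diff : ∀ i, Differentiable ℝ (h i))
    (xhat xtil : EuclideanSpace ℝ (Fin n))
    (lam : Fin J → ℝ) (hlam : ∀ j, 0 ≤ lam j)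
    (nu : Fin I → ℝ) (hnu : ∀ i, 0 ≤ nu i)
    (v : EuclideanSpace ℝ (Fin n))
    (hv : ∀ y, u y ≥ u xhat + ⟪v, y - xhat⟫)
    (hstat : gradient Ftil xhat + v + ∑ j, lam j • gradient (gtil j) xhat
        + ∑ i, nu i • gradient (h i) xhat = 0)
    (hcs_g : ∀ j, lam j * gtil j xhat = 0)
    (hcs_h : ∀ i, nu i * h i xhat = 0)
    (hslater_g : ∀ j, gtil j xtil ≤ -ρ ^ 2 / (2 * L))
    (hslater_h : ∀ i, h i xtil ≤ -ρ ^ 2 / (2 * L))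
    (hbound : Ftil xtil + u xtil - (Ftil xhat + u xhat) ≤ B_U) :
    ∑ j, lam j + ∑ i, nu i ≤ 2 * B_U * L / ρ ^ 2 :=
  dual_variable_bound_general L ρ B_U hL hρ Ftil u gtil h hF_conv hF_diff hg_conv hg_diff hh_conv
    hh_diff xhat xtil lam hlam nu hnu v hv hstat hcs_g hcs_h hslater_g hslater_h hbound
end

section
/- Let K′ ⊆ ℝ^n be a convex set, L > 0, μ > 0, and η ∈ (0,1] with μ ≥ Lη/2 + 3/4. Let U : ℝ^n → ℝ be L-smooth, u : ℝ^n → ℝ be convex, and f̃ : ℝ^n → ℝ be μ-strongly convex and differentiable. Let x_t, x̂ ∈ K′ and let v ∈ ℝ^n be a subgradient of u at x̂ satisfying ⟨y − x̂, ∇f̃(x̂) + v⟩ ≥ 0 for all y ∈ K′. Set z := ∇f̃(x_t), F := U + u, and x_{t+1} := (1−η)x_t + η x̂. Then F(x_{t+1}) − F(x_t) ≤ (η/2)‖z − ∇U(x_t)‖² − (η/4)‖x̂ − x_t‖². (Deterministic core of the descent lemma, Lemma 2 of the paper.) -/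
/-!
Write `x_{t+1} = x_t + η d` with `d = x̂ - x_t`. L-smoothness bounds the increase of `U` by
`η ⟪∇U x_t, d⟫ + L η² / 2 ‖d‖²`, and convexity bounds that of `u` by `η (u x̂ - u x_t)`.
The subgradient inequality at `x_t`, the optimality condition tested at `y = x_t` and the strong
monotonicity of `∇f̃` give `u x̂ - u x_t ≤ -⟪z, d⟫ - μ ‖d‖²`. Cauchy–Schwarz and AM–GM on
`⟪∇U x_t - z, d⟫` leave `η (L η / 2 + 1 / 2 - μ) ‖d‖² ≤ -η / 4 ‖d‖²` on the quadratic term.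
-/

open RealInnerProductSpace Set

section

variable {E : Type*} [NormedAddCommGroup E] [InnerProductSpace ℝ E] [CompleteSpace E]

theorem HasGradientAt.hasDerivAt_comp_add_smul {f : E → ℝ} {g x w : E} {t : ℝ}
    (hf : HasGradientAt f g (x + t • w)) :
    HasDerivAt (fun s : ℝ => f (x + s • w)) ⟪g, w⟫ t := by
  have hline : HasDerivAt (fun s : ℝ => x + s • w) w t := by
    simpa using ((hasDerivAt_id t).smul_const w).const_add x
  simpa [Function.comp_def] using (hasGradientAt_iff_hasFDerivAt.1 hf).comp_hasDerivAt t hline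

theorem HasGradientAt.sub_half_mul_norm_sq {f : E → ℝ} {g x : E}
    (hf : HasGradientAt f g x) (μ : ℝ) :
    HasGradientAt (fun y => f y - μ / 2 * ‖y‖ ^ 2) (g - μ • x) x := by
  rw [hasGradientAt_iff_hasFDerivAt] at hf ⊢
  refine (hf.sub ((hasStrictFDerivAt_norm_sq x).hasFDerivAt.const_mul (μ / 2))).congr_fderiv ?_
  ext y
  simp only [sub_apply, InnerProductSpace.toDual_apply_apply, smul_apply, coe_innerSL_apply,
    nsmul_eq_mul, Nat.cast_ofNat, smul_eq_mul, map_sub, map_smul, sub_right_inj]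
  ring

theorem ConvexOn.add_inner_le_of_hasGradientAt {f : E → ℝ} {g x : E}
    (hf : ConvexOn ℝ univ f) (hg : HasGradientAt f g x) (y : E) :
    f x + ⟪g, y - x⟫ ≤ f y := by
  have hline : ConvexOn ℝ univ (fun s : ℝ => f (x + s • (y - x))) := by
    simpa [Function.comp_def, AffineMap.lineMap_apply, add_comm] using
      hf.comp_affineMap (AffineMap.lineMap x y)
  have hg0 : HasGradientAt f g (x + (0 : ℝ) • (y - x)) := by simpa using hg
  have := hline.le_slope_of_hasDerivAt (mem_univ 0) (mem_univ 1) one_pos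
    hg0.hasDerivAt_comp_add_smul
  simp only [slope_def_field, one_smul, add_sub_cancel, zero_smul, add_zero, sub_zero,
    div_one] at this
  linarith

theorem ConvexOn.mul_norm_sq_le_inner_gradient_sub {f : E → ℝ} {μ : ℝ}
    (hconv : ConvexOn ℝ univ (fun x => f x - μ / 2 * ‖x‖ ^ 2)) (hf : Differentiable ℝ f)
    (x y : E) :
    μ * ‖y - x‖ ^ 2 ≤ ⟪gradient f y - gradient f x, y - x⟫ := by
  have hgrad (z : E) := (hf z).hasGradientAt.sub_half_mul_norm_sq μ
  have hxy := hconv.add_inner_le_of_hasGradientAt (hgrad x) y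
  have hyx := hconv.add_inner_le_of_hasGradientAt (hgrad y) x
  have hsum : ⟪(gradient f y - μ • y) - (gradient f x - μ • x), y - x⟫
      = -(⟪gradient f x - μ • x, y - x⟫
        + ⟪gradient f y - μ • y, x - y⟫) := by
    simp only [inner_sub_left, inner_sub_right]
    ring
  have hexpand :
      ⟪(gradient f y - μ • y) - (gradient f x - μ • x), y - x⟫
        = ⟪gradient f y - gradient f x, y - x⟫ - μ * ‖y - x‖ ^ 2 := by
    rw [show (gradient f y - μ • y) - (gradient f x - μ • x)
        = (gradient f y - gradient f x) - μ • (y - x) by module,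
      inner_sub_left, real_inner_smul_left, real_inner_self_eq_norm_sq]
  linarith

theorem sub_le_neg_inner_gradient_sub_of_inner_nonneg {f u : E → ℝ} {μ : ℝ}
    (hconv : ConvexOn ℝ univ (fun x => f x - μ / 2 * ‖x‖ ^ 2)) (hf : Differentiable ℝ f)
    {x xhat v : E} (hv : u xhat + ⟪v, x - xhat⟫ ≤ u x)
    (hopt : 0 ≤ ⟪x - xhat, gradient f xhat + v⟫) :
    u xhat - u x ≤ -⟪gradient f x, xhat - x⟫ - μ * ‖xhat - x‖ ^ 2 := by
  have hmono := hconv.mul_norm_sq_le_inner_gradient_sub hf x xhat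
  rw [← neg_sub xhat x, inner_neg_right] at hv
  rw [← neg_sub xhat x, inner_neg_left, inner_add_right, real_inner_comm _ (xhat - x),
    real_inner_comm _ (xhat - x)] at hopt
  rw [inner_sub_left] at hmono
  linarith

theorem Differentiable.apply_add_le_of_lipschitz_gradient {f : E → ℝ} {L : ℝ}
    (hf : Differentiable ℝ f) (hL : ∀ x y, ‖gradient f x - gradient f y‖ ≤ L * ‖x - y‖)
    (x w : E) :
    f (x + w) ≤ f x + ⟪gradient f x, w⟫ + L / 2 * ‖w‖ ^ 2 := by
  set φ : ℝ → ℝ := fun t => f (x + t • w) - t * ⟪gradient f x, w⟫ - L / 2 * t ^ 2 * ‖w‖ ^ 2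
  have hφ (t : ℝ) : HasDerivAt φ
      (⟪gradient f (x + t • w), w⟫ - ⟪gradient f x, w⟫ - L * t * ‖w‖ ^ 2) t := by
    refine ((((hf _).hasGradientAt.hasDerivAt_comp_add_smul).sub
      ((hasDerivAt_id t).mul_const _)).sub
      (((hasDerivAt_pow 2 t).const_mul (L / 2)).mul_const (‖w‖ ^ 2))).congr_deriv ?_
    simp only [one_mul, Nat.cast_ofNat]
    ring
  have hφ_nonpos (t : ℝ) (ht : 0 ≤ t) :
      ⟪gradient f (x + t • w), w⟫ - ⟪gradient f x, w⟫ - L * t * ‖w‖ ^ 2 ≤ 0 := by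
    have := calc ⟪gradient f (x + t • w), w⟫ - ⟪gradient f x, w⟫
        = ⟪gradient f (x + t • w) - gradient f x, w⟫ := (inner_sub_left _ _ _).symm
      _ ≤ ‖gradient f (x + t • w) - gradient f x‖ * ‖w‖ := real_inner_le_norm _ _
      _ ≤ L * ‖x + t • w - x‖ * ‖w‖ := by gcongr; exact hL _ _
      _ = L * t * ‖w‖ ^ 2 := by
        rw [add_sub_cancel_left, norm_smul, Real.norm_of_nonneg ht]; ring
    linarith
  have hanti : AntitoneOn φ (Icc 0 1) := by
    refine antitoneOn_of_hasDerivWithinAt_nonpos (convex_Icc 0 1)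
      (fun t _ => (hφ t).continuousAt.continuousWithinAt)
      (fun t _ => (hφ t).hasDerivWithinAt) ?_
    rw [interior_Icc]
    exact fun t ht => hφ_nonpos t ht.1.le
  have := hanti (left_mem_Icc.2 zero_le_one) (right_mem_Icc.2 zero_le_one) zero_le_one
  simp only [φ, zero_smul, add_zero, one_smul, zero_mul, sub_zero, one_pow, mul_one,
    ne_eq, OfNat.ofNat_ne_zero, not_false_eq_true, zero_pow, one_mul] at this
  linarith

end

theorem descent_lemma_core_general {n : ℕ}
    (K' : Set (EuclideanSpace ℝ (Fin n)))
    (L μ η : ℝ)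
    (hη0 : 0 < η) (hη1 : η ≤ 1) (hμη : μ ≥ L * η / 2 + 3 / 4)
    (U : EuclideanSpace ℝ (Fin n) → ℝ)
    (hU_diff : Differentiable ℝ U)
    (hU_smooth : ∀ x y, ‖gradient U x - gradient U y‖ ≤ L * ‖x - y‖)
    (u : EuclideanSpace ℝ (Fin n) → ℝ) (hu_conv : ConvexOn ℝ Set.univ u)
    (ftil : EuclideanSpace ℝ (Fin n) → ℝ)
    (hf_diff : Differentiable ℝ ftil)
    (hf_sc : ConvexOn ℝ Set.univ (fun x => ftil x - μ / 2 * ‖x‖ ^ 2))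
    (xt xhat : EuclideanSpace ℝ (Fin n)) (hxt : xt ∈ K')
    (v : EuclideanSpace ℝ (Fin n))
    (hv : ∀ y, u y ≥ u xhat + ⟪v, y - xhat⟫)
    (hopt : ∀ y ∈ K', ⟪y - xhat, gradient ftil xhat + v⟫ ≥ 0) :
    (U ((1 - η) • xt + η • xhat) + u ((1 - η) • xt + η • xhat)) - (U xt + u xt)
      ≤ η / 2 * ‖gradient ftil xt - gradient U xt‖ ^ 2
        - η / 4 * ‖xhat - xt‖ ^ 2 := by
  have hnext : (1 - η) • xt + η • xhat = xt + η • (xhat - xt) := by module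
  have hU := hU_diff.apply_add_le_of_lipschitz_gradient hU_smooth xt (η • (xhat - xt))
  rw [real_inner_smul_right, norm_smul, Real.norm_of_nonneg hη0.le, mul_pow] at hU
  have hu : u ((1 - η) • xt + η • xhat) ≤ (1 - η) * u xt + η * u xhat :=
    hu_conv.2 (mem_univ xt) (mem_univ xhat) (by linarith) hη0.le (by ring)
  have hgap := sub_le_neg_inner_gradient_sub_of_inner_nonneg hf_sc hf_diff (hv xt) (hopt xt hxt)
  rw [hnext] at hu ⊢
  set d := xhat - xt
  have hcs : ⟪gradient U xt, d⟫ - ⟪gradient ftil xt, d⟫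
      ≤ ‖gradient ftil xt - gradient U xt‖ * ‖d‖ := by
    rw [← inner_sub_left, norm_sub_rev]
    exact real_inner_le_norm _ _
  calc U (xt + η • d) + u (xt + η • d) - (U xt + u xt)
      ≤ η * (⟪gradient U xt, d⟫ + (u xhat - u xt)) + L / 2 * η ^ 2 * ‖d‖ ^ 2 := by linarith
    _ ≤ η * (‖gradient ftil xt - gradient U xt‖ * ‖d‖) - η * (μ - L * η / 2) * ‖d‖ ^ 2 := by
      linarith [mul_le_mul_of_nonneg_left (add_le_add hcs hgap) hη0.le]
    _ ≤ η / 2 * ‖gradient ftil xt - gradient U xt‖ ^ 2 - η / 4 * ‖d‖ ^ 2 := by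
      linarith [mul_nonneg hη0.le (sq_nonneg (‖gradient ftil xt - gradient U xt‖ - ‖d‖)),
        mul_le_mul_of_nonneg_left hμη (mul_nonneg hη0.le (sq_nonneg ‖d‖))]

/-- Deterministic core of the descent lemma (Lemma 2). -/
theorem descent_lemma_core {n : ℕ}
    (K' : Set (EuclideanSpace ℝ (Fin n))) (hK' : Convex ℝ K')
    (L μ η : ℝ) (hL : 0 < L) (hμ : 0 < μ)
    (hη0 : 0 < η) (hη1 : η ≤ 1) (hμη : μ ≥ L * η / 2 + 3 / 4)
    (U : EuclideanSpace ℝ (Fin n) → ℝ)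
    (hU_diff : Differentiable ℝ U)
    (hU_smooth : ∀ x y, ‖gradient U x - gradient U y‖ ≤ L * ‖x - y‖)
    (u : EuclideanSpace ℝ (Fin n) → ℝ) (hu_conv : ConvexOn ℝ Set.univ u)
    (ftil : EuclideanSpace ℝ (Fin n) → ℝ)
    (hf_diff : Differentiable ℝ ftil)
    (hf_sc : ConvexOn ℝ Set.univ (fun x => ftil x - μ / 2 * ‖x‖ ^ 2))
    (xt xhat : EuclideanSpace ℝ (Fin n)) (hxt : xt ∈ K') (hxh : xhat ∈ K')
    (v : EuclideanSpace ℝ (Fin n))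
    (hv : ∀ y, u y ≥ u xhat + ⟪v, y - xhat⟫)
    (hopt : ∀ y ∈ K', ⟪y - xhat, gradient ftil xhat + v⟫ ≥ 0) :
    (U ((1 - η) • xt + η • xhat) + u ((1 - η) • xt + η • xhat)) - (U xt + u xt)
      ≤ η / 2 * ‖gradient ftil xt - gradient U xt‖ ^ 2
        - η / 4 * ‖xhat - xt‖ ^ 2 :=
  descent_lemma_core_general K' L μ η hη0 hη1 hμη U hU_diff hU_smooth u hu_conv ftil hf_diff hf_sc
    xt xhat hxt v hv hopt
end

section
/- Let L > 0. Let U, f̂ : ℝ^n → ℝ be L-smooth, and for j = 1,…,J let g_j, g̃_j : ℝ^n → ℝ be L-smooth. Let h_i : ℝ^n → ℝ, i = 1,…,I, be differentiable. Let x_t, x̂, z, v ∈ ℝ^n, λ ∈ ℝ^J with λ_j ≥ 0, and ν ∈ ℝ^I. Assume the tangent-match condition ∇g_j(x_t) = ∇g̃_j(x_t) for all j, and the subproblem stationarity condition ∇f̂(x̂) − ∇f̂(x_t) + z + v + Σ_j λ_j ∇g̃_j(x̂) + Σ_i ν_i ∇h_i(x̂) = 0. Then ‖∇U(x̂) + Σ_{j=1}^J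 λ_j ∇g_j(x̂) + Σ_{i=1}^I ν_i ∇h_i(x̂) + v‖ ≤ 2L(1 + Σ_{j=1}^J λ_j)‖x̂ − x_t‖ + ‖z − ∇U(x_t)‖. (KKT-residual bound in the proof of Theorem 2.) -/
/-!
Subtracting the subproblem stationarity condition from the KKT residual of the original problem
leaves four error terms: the gradient increments of `U` and of `f̂` between `xₜ` and `x̂`, the
mismatch `Σ λⱼ (∇gⱼ(x̂) - ∇g̃ⱼ(x̂))`, and the tracking error `∇U(xₜ) - z`. The first two are at
most `L‖x̂ - xₜ‖` each, and since `∇gⱼ` and `∇g̃ⱼ` agree at `xₜ`, each mismatch is at most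
`2L‖x̂ - xₜ‖`.
-/

open RealInnerProductSpace

open Finset

lemma residual_eq_of_stationary {R E ι : Type*} [Ring R] [AddCommGroup E] [Module R E]
    (s : Finset ι) (a a₀ b b₀ z v H : E) (lam : ι → R) (G T : ι → E)
    (hstat : b - b₀ + z + v + ∑ j ∈ s, lam j • T j + H = 0) :
    a + ∑ j ∈ s, lam j • G j + H + v
      = (a - a₀) - (b - b₀) + ∑ j ∈ s, lam j • (G j - T j) + (a₀ - z) := by
  rw [eq_neg_of_add_eq_zero_right hstat]
  simp only [smul_sub, sum_sub_distrib]
  abel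

lemma norm_sum_smul_le_of_nonneg {E ι : Type*} [SeminormedAddCommGroup E] [NormedSpace ℝ E]
    (s : Finset ι) (w : ι → ℝ) (u : ι → E) {C : ℝ} (hw : ∀ j ∈ s, 0 ≤ w j)
    (hu : ∀ j ∈ s, ‖u j‖ ≤ C) :
    ‖∑ j ∈ s, w j • u j‖ ≤ (∑ j ∈ s, w j) * C := by
  rw [sum_mul]
  refine norm_sum_le_of_le s fun j hj => ?_
  rw [norm_smul, Real.norm_of_nonneg (hw j hj)]
  exact mul_le_mul_of_nonneg_left (hu j hj) (hw j hj)

lemma norm_sub_le_of_eq_of_lipschitz {E F : Type*} [SeminormedAddCommGroup E]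
    [SeminormedAddCommGroup F] {φ ψ : E → F} {L : ℝ} {x₀ : E}
    (hφ : ∀ x y, ‖φ x - φ y‖ ≤ L * ‖x - y‖) (hψ : ∀ x y, ‖ψ x - ψ y‖ ≤ L * ‖x - y‖)
    (hx₀ : φ x₀ = ψ x₀) (x : E) :
    ‖φ x - ψ x‖ ≤ 2 * L * ‖x - x₀‖ := by
  have hsplit : φ x - ψ x = (φ x - φ x₀) - (ψ x - ψ x₀) := by rw [hx₀]; abel
  calc ‖φ x - ψ x‖ ≤ ‖φ x - φ x₀‖ + ‖ψ x - ψ x₀‖ := hsplit ▸ norm_sub_le _ _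
    _ ≤ L * ‖x - x₀‖ + L * ‖x - x₀‖ := add_le_add (hφ x x₀) (hψ x x₀)
    _ = 2 * L * ‖x - x₀‖ := by ring

theorem kkt_residual_bound_general {n J I : ℕ} (L : ℝ)
    (U fhat : EuclideanSpace ℝ (Fin n) → ℝ)
    (hU_smooth : ∀ x y, ‖gradient U x - gradient U y‖ ≤ L * ‖x - y‖)
    (hf_smooth : ∀ x y, ‖gradient fhat x - gradient fhat y‖ ≤ L * ‖x - y‖)
    (g gtil : Fin J → EuclideanSpace ℝ (Fin n) → ℝ)
    (hg_smooth : ∀ j x y, ‖gradient (g j) x - gradient (g j) y‖ ≤ L * ‖x - y‖)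
    (hgt_smooth : ∀ j x y, ‖gradient (gtil j) x - gradient (gtil j) y‖ ≤ L * ‖x - y‖)
    (h : Fin I → EuclideanSpace ℝ (Fin n) → ℝ)
    (xt xhat z v : EuclideanSpace ℝ (Fin n))
    (lam : Fin J → ℝ) (hlam : ∀ j, 0 ≤ lam j)
    (nu : Fin I → ℝ)
    (htangent : ∀ j, gradient (g j) xt = gradient (gtil j) xt)
    (hstat : gradient fhat xhat - gradient fhat xt + z + v
        + ∑ j, lam j • gradient (gtil j) xhat
        + ∑ i, nu i • gradient (h i) xhat = 0) :
    ‖gradient U xhat + ∑ j, lam j • gradient (g j) xhat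
        + ∑ i, nu i • gradient (h i) xhat + v‖
      ≤ 2 * L * (1 + ∑ j, lam j) * ‖xhat - xt‖ + ‖z - gradient U xt‖ := by
  rw [residual_eq_of_stationary _ _ (gradient U xt) _ _ _ _ _ _ _ _ hstat]
  set D := ‖xhat - xt‖
  have hmismatch : ‖∑ j, lam j • (gradient (g j) xhat - gradient (gtil j) xhat)‖
      ≤ (∑ j, lam j) * (2 * L * D) :=
    norm_sum_smul_le_of_nonneg _ _ _ (fun j _ => hlam j) fun j _ =>
      norm_sub_le_of_eq_of_lipschitz (hg_smooth j) (hgt_smooth j) (htangent j) xhat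
  calc _ ≤ ‖gradient U xhat - gradient U xt‖ + ‖gradient fhat xhat - gradient fhat xt‖
          + ‖∑ j, lam j • (gradient (g j) xhat - gradient (gtil j) xhat)‖
          + ‖gradient U xt - z‖ :=
        (norm_add_le _ _).trans <| by
          gcongr
          exact (norm_add_le _ _).trans (by gcongr; exact norm_sub_le _ _)
    _ ≤ L * D + L * D + (∑ j, lam j) * (2 * L * D) + ‖z - gradient U xt‖ := by
        rw [norm_sub_rev (gradient U xt)]
        gcongr
        · exact hU_smooth xhat xt
        · exact hf_smooth xhat xt
    _ = 2 * L * (1 + ∑ j, lam j) * D + ‖z - gradient U xt‖ := by ring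

/-- KKT-residual bound in the proof of Theorem 2. -/
theorem kkt_residual_bound {n J I : ℕ} (L : ℝ) (hL : 0 < L)
    (U fhat : EuclideanSpace ℝ (Fin n) → ℝ)
    (hU_diff : Differentiable ℝ U)
    (hU_smooth : ∀ x y, ‖gradient U x - gradient U y‖ ≤ L * ‖x - y‖)
    (hf_diff : Differentiable ℝ fhat)
    (hf_smooth : ∀ x y, ‖gradient fhat x - gradient fhat y‖ ≤ L * ‖x - y‖)
    (g gtil : Fin J → EuclideanSpace ℝ (Fin n) → ℝ)
    (hg_diff : ∀ j, Differentiable ℝ (g j))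
    (hg_smooth : ∀ j x y, ‖gradient (g j) x - gradient (g j) y‖ ≤ L * ‖x - y‖)
    (hgt_diff : ∀ j, Differentiable ℝ (gtil j))
    (hgt_smooth : ∀ j x y, ‖gradient (gtil j) x - gradient (gtil j) y‖ ≤ L * ‖x - y‖)
    (h : Fin I → EuclideanSpace ℝ (Fin n) → ℝ)
    (hh_diff : ∀ i, Differentiable ℝ (h i))
    (xt xhat z v : EuclideanSpace ℝ (Fin n))
    (lam : Fin J → ℝ) (hlam : ∀ j, 0 ≤ lam j)
    (nu : Fin I → ℝ)
    (htangent : ∀ j, gradient (g j) xt = gradient (gtil j) xt)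
    (hstat : gradient fhat xhat - gradient fhat xt + z + v
        + ∑ j, lam j • gradient (gtil j) xhat
        + ∑ i, nu i • gradient (h i) xhat = 0) :
    ‖gradient U xhat + ∑ j, lam j • gradient (g j) xhat
        + ∑ i, nu i • gradient (h i) xhat + v‖
      ≤ 2 * L * (1 + ∑ j, lam j) * ‖xhat - xt‖ + ‖z - gradient U xt‖ :=
  kkt_residual_bound_general L U fhat hU_smooth hf_smooth g gtil hg_smooth hgt_smooth h xt xhat z v
    lam hlam nu htangent hstat
end

section
/- Let L > 0 and for j = 1,…,J let g_j, g̃_j : ℝ^n → ℝ both be L-smooth with g_j(x_t) = g̃_j(x_t) and ∇g_j(x_t) = ∇g̃_j(x_t) at a point x_t ∈ ℝ^n. Let x̂ ∈ ℝ^n and λ ∈ ℝ^J with λ_j ≥ 0 and λ_j · g̃_j(x̂) = 0 for all j. Then Σ_{j=1}^J λ_j g_j(x̂) ≥ −L (Σ_{j=1}^J λ_j) ‖x̂ − x_t‖². (Approximate complementary slackness bound in the proof of Theorem 2.) -/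
/-! Since `g_j` and `g̃_j` agree to first order at `x_t`, their difference has vanishing value and
gradient there and a `2L`-Lipschitz gradient; integrating the gradient along the segment from `x_t`
gives `|g_j x̂ - g̃_j x̂| ≤ L ‖x̂ - x_t‖²`. Complementary slackness turns `λ_j g_j(x̂)` into
`λ_j (g_j - g̃_j)(x̂)`, and summing the resulting lower bounds over `j` (with `λ_j ≥ 0`) proves the
claim. -/

open RealInnerProductSpace

section TaylorBound

variable {E F : Type*} [NormedAddCommGroup E] [NormedSpace ℝ E]
  [NormedAddCommGroup F] [NormedSpace ℝ F]

theorem norm_sub_sub_fderiv_le_of_lipschitz {f : E → F} {f' : E → E →L[ℝ] F} {C : ℝ} {x : E}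
    (hf : ∀ z, HasFDerivAt f (f' z) z) (hf' : ∀ z, ‖f' z - f' x‖ ≤ C * ‖z - x‖) (y : E) :
    ‖f y - f x - f' x (y - x)‖ ≤ C / 2 * ‖y - x‖ ^ 2 := by
  set v := y - x
  set φ : ℝ → F := fun t => f (x + t • v) - f x - t • f' x v
  set φ' : ℝ → F := fun t => (f' (x + t • v) - f' x) v
  have hφ : ∀ t, HasDerivAt φ (φ' t) t := by
    intro t
    have hline : HasDerivAt (fun s : ℝ => x + s • v) v t := by
      simpa using ((hasDerivAt_id t).smul_const v).const_add x
    have hlin : HasDerivAt (fun s : ℝ => s • f' x v) (f' x v) t := by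
      simpa using (hasDerivAt_id t).smul_const (f' x v)
    exact ((((hf _).comp_hasDerivAt t hline).sub_const (f x)).sub hlin).congr_deriv
      (sub_apply _ _ _).symm
  have hB : ∀ t : ℝ, HasDerivAt (fun t => C / 2 * ‖v‖ ^ 2 * t ^ 2) (C * ‖v‖ ^ 2 * t) t := by
    intro t
    refine ((hasDerivAt_pow 2 t).const_mul (C / 2 * ‖v‖ ^ 2)).congr_deriv ?_
    push_cast
    ring
  have hφ'_le : ∀ t ∈ Set.Ico (0 : ℝ) 1, ‖φ' t‖ ≤ C * ‖v‖ ^ 2 * t := fun t ht =>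
    calc ‖φ' t‖ ≤ ‖f' (x + t • v) - f' x‖ * ‖v‖ := (f' (x + t • v) - f' x).le_opNorm v
      _ ≤ C * ‖t • v‖ * ‖v‖ := by
        gcongr
        simpa using hf' (x + t • v)
      _ = C * ‖v‖ ^ 2 * t := by
        rw [norm_smul, Real.norm_of_nonneg ht.1]
        ring
  have h01 := image_norm_le_of_norm_deriv_right_le_deriv_boundary
    (fun t _ => (hφ t).continuousAt.continuousWithinAt) (fun t _ => (hφ t).hasDerivWithinAt)
    (by simp [φ]) hB hφ'_le (x := 1) (by simp)
  simpa [φ, v] using h01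

end TaylorBound

theorem abs_sub_le_of_eq_of_gradient_eq {E : Type*} [NormedAddCommGroup E]
    [InnerProductSpace ℝ E] [CompleteSpace E] {f g : E → ℝ} {L : ℝ} {x₀ : E}
    (hf : Differentiable ℝ f) (hf' : ∀ x y, ‖gradient f x - gradient f y‖ ≤ L * ‖x - y‖)
    (hg : Differentiable ℝ g) (hg' : ∀ x y, ‖gradient g x - gradient g y‖ ≤ L * ‖x - y‖)
    (hval : f x₀ = g x₀) (hgrad : gradient f x₀ = gradient g x₀) (x : E) :
    |f x - g x| ≤ L * ‖x - x₀‖ ^ 2 := by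
  set D : E → E →L[ℝ] ℝ := fun z =>
    InnerProductSpace.toDual ℝ E (gradient f z) - InnerProductSpace.toDual ℝ E (gradient g z)
  have hD : ∀ z, HasFDerivAt (fun z => f z - g z) (D z) z := fun z =>
    (hf z).hasGradientAt.hasFDerivAt.sub (hg z).hasGradientAt.hasFDerivAt
  have hD_lip : ∀ z, ‖D z - D x₀‖ ≤ (2 * L) * ‖z - x₀‖ := by
    intro z
    have hDz : D z - D x₀ = InnerProductSpace.toDual ℝ E
        ((gradient f z - gradient f x₀) - (gradient g z - gradient g x₀)) := by
      simp only [D, map_sub]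
      abel
    rw [hDz, LinearIsometryEquiv.norm_map]
    linarith [norm_sub_le (gradient f z - gradient f x₀) (gradient g z - gradient g x₀),
      hf' z x₀, hg' z x₀]
  have hD₀ : D x₀ = 0 := by simp only [D, hgrad, sub_self]
  have := norm_sub_sub_fderiv_le_of_lipschitz hD hD_lip x
  simpa [hD₀, hval, Real.norm_eq_abs, mul_div_cancel_left₀] using this

theorem approx_complementary_slackness_general {n J : ℕ} (L : ℝ)
    (g gtil : Fin J → EuclideanSpace ℝ (Fin n) → ℝ)
    (hg_diff : ∀ j, Differentiable ℝ (g j))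
    (hg_smooth : ∀ j x y, ‖gradient (g j) x - gradient (g j) y‖ ≤ L * ‖x - y‖)
    (hgt_diff : ∀ j, Differentiable ℝ (gtil j))
    (hgt_smooth : ∀ j x y, ‖gradient (gtil j) x - gradient (gtil j) y‖ ≤ L * ‖x - y‖)
    (xt : EuclideanSpace ℝ (Fin n))
    (hval : ∀ j, g j xt = gtil j xt)
    (hgrad : ∀ j, gradient (g j) xt = gradient (gtil j) xt)
    (xhat : EuclideanSpace ℝ (Fin n))
    (lam : Fin J → ℝ) (hlam : ∀ j, 0 ≤ lam j)
    (hcs : ∀ j, lam j * gtil j xhat = 0) :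
    ∑ j, lam j * g j xhat ≥ -(L * (∑ j, lam j) * ‖xhat - xt‖ ^ 2) := by
  have hterm : ∀ j, -(lam j * (L * ‖xhat - xt‖ ^ 2)) ≤ lam j * g j xhat := by
    intro j
    have hgap : -(L * ‖xhat - xt‖ ^ 2) ≤ g j xhat - gtil j xhat :=
      neg_le_of_abs_le <| abs_sub_le_of_eq_of_gradient_eq (hg_diff j) (hg_smooth j)
        (hgt_diff j) (hgt_smooth j) (hval j) (hgrad j) xhat
    calc -(lam j * (L * ‖xhat - xt‖ ^ 2)) = lam j * -(L * ‖xhat - xt‖ ^ 2) := by ring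
      _ ≤ lam j * (g j xhat - gtil j xhat) := mul_le_mul_of_nonneg_left hgap (hlam j)
      _ = lam j * g j xhat := by rw [mul_sub, hcs j, sub_zero]
  calc -(L * (∑ j, lam j) * ‖xhat - xt‖ ^ 2) = ∑ j, -(lam j * (L * ‖xhat - xt‖ ^ 2)) := by
        rw [Finset.sum_neg_distrib, ← Finset.sum_mul]
        ring
    _ ≤ ∑ j, lam j * g j xhat := Finset.sum_le_sum fun j _ => hterm j

/-- Approximate complementary slackness bound in the proof of Theorem 2. -/
theorem approx_complementary_slackness {n J : ℕ} (L : ℝ) (hL : 0 < L)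
    (g gtil : Fin J → EuclideanSpace ℝ (Fin n) → ℝ)
    (hg_diff : ∀ j, Differentiable ℝ (g j))
    (hg_smooth : ∀ j x y, ‖gradient (g j) x - gradient (g j) y‖ ≤ L * ‖x - y‖)
    (hgt_diff : ∀ j, Differentiable ℝ (gtil j))
    (hgt_smooth : ∀ j x y, ‖gradient (gtil j) x - gradient (gtil j) y‖ ≤ L * ‖x - y‖)
    (xt : EuclideanSpace ℝ (Fin n))
    (hval : ∀ j, g j xt = gtil j xt)
    (hgrad : ∀ j, gradient (g j) xt = gradient (gtil j) xt)
    (xhat : EuclideanSpace ℝ (Fin n))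
    (lam : Fin J → ℝ) (hlam : ∀ j, 0 ≤ lam j)
    (hcs : ∀ j, lam j * gtil j xhat = 0) :
    ∑ j, lam j * g j xhat ≥ -(L * (∑ j, lam j) * ‖xhat - xt‖ ^ 2) :=
  approx_complementary_slackness_general L g gtil hg_diff hg_smooth hgt_diff hgt_smooth xt hval
    hgrad xhat lam hlam hcs
end

section
/- Let L, G, k̄, c, w > 0 and let (G_t)_{t≥1} be nonnegative reals with G_t ≤ G for all t. Define η_0 := k̄ / w^{1/3}, η_t := k̄ / (w + Σ_{i=1}^{t} G_i²)^{1/3} for t ≥ 1, and β_t := c η_{t−1}² for t ≥ 1, and assume β_t < 1/2 for all t ≥ 1. Then for every t ≥ 1: 8L² η_t + 1/η_t − 1/((1 − 2β_t) η_{t−1}) ≤ −2 η_{t−1} (c − 4L² − G² η_{t−1} / (6 k̄³)). In particular, if additionally η_{t−1} ≤ 1 and c > 4L² + G²/(6k̄³), this quantity is at most −2 η_{t−1}(c − 4L² − G²/(6k̄³)) < 0. (Negativity of the coefficient α_t in the proof of Theorem 1.) -/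
/-!
With `η = k / A^{1/3}` and `A` growing by `G_t²` at step `t`, concavity of the cube root gives
`1/η_t - 1/η_{t-1} ≤ G_t² η_{t-1}² / (3 k³)`, while `1/(1 - 2β) ≥ 1 + 2β` turns the momentum
term into `-1/η_{t-1} - 2c η_{t-1}`. Since `η_t ≤ η_{t-1}`, the three contributions add up to the bound.
-/

theorem Real.rpow_sub_rpow_le_mul_sub {p a b : ℝ} (hp0 : 0 ≤ p) (hp1 : p ≤ 1) (ha : 0 < a)
    (hb : 0 ≤ b) : b ^ p - a ^ p ≤ p * a ^ p / a * (b - a) := by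
  have hs : -1 ≤ (b - a) / a := by rw [le_div_iff₀ ha]; linarith
  have hb_eq : b = a * (1 + (b - a) / a) := by field_simp; ring
  have hBern := rpow_one_add_le_one_add_mul_self hs hp0 hp1
  calc b ^ p - a ^ p = a ^ p * ((1 + (b - a) / a) ^ p - 1) := by
        rw [hb_eq, Real.mul_rpow ha.le (by linarith), ← hb_eq]; ring
    _ ≤ a ^ p * (p * ((b - a) / a)) := by gcongr; linarith
    _ = p * a ^ p / a * (b - a) := by ring

theorem one_add_le_one_div_one_sub {x : ℝ} (hx : x < 1) : 1 + x ≤ 1 / (1 - x) := by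
  rw [le_div_iff₀ (by linarith)]
  nlinarith [sq_nonneg x]

noncomputable def cbrtStep (k A : ℝ) : ℝ := k / A ^ ((1 : ℝ) / 3)

section cbrtStep

variable {k A B : ℝ}

theorem cbrtStep_pos (hk : 0 < k) (hA : 0 < A) : 0 < cbrtStep k A := by
  unfold cbrtStep; positivity

theorem cbrtStep_anti (hk : 0 ≤ k) (hA : 0 < A) (hAB : A ≤ B) : cbrtStep k B ≤ cbrtStep k A :=
  div_le_div_of_nonneg_left hk (by positivity) (by gcongr)

theorem one_div_cbrtStep_sub_one_div_cbrtStep_le (hk : 0 < k) (hA : 0 < A) (hB : 0 ≤ B) :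
    1 / cbrtStep k B - 1 / cbrtStep k A ≤ (B - A) * cbrtStep k A ^ 2 / (3 * k ^ 3) := by
  set u := A ^ ((1 : ℝ) / 3) with hu
  have hu0 : 0 < u := by positivity
  have hu3 : u ^ 3 = A := by
    rw [hu, ← Real.rpow_natCast, ← Real.rpow_mul hA.le]; norm_num
  have hcbrt := Real.rpow_sub_rpow_le_mul_sub (p := 1 / 3) (by norm_num) (by norm_num) hA hB
  unfold cbrtStep
  rw [← hu] at hcbrt ⊢
  calc 1 / (k / B ^ ((1 : ℝ) / 3)) - 1 / (k / u) = (B ^ ((1 : ℝ) / 3) - u) / k := by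
        field_simp
    _ ≤ 1 / 3 * u / A * (B - A) / k := by gcongr
    _ = (B - A) * (k / u) ^ 2 / (3 * k ^ 3) := by
        rw [← hu3]; field_simp

end cbrtStep

theorem alpha_le {L k c g e f : ℝ} (he : 0 < e) (hfe : f ≤ e)
    (hinv : 1 / f - 1 / e ≤ g * e ^ 2 / (3 * k ^ 3)) (hβ : c * e ^ 2 < 1 / 2) :
    8 * L ^ 2 * f + 1 / f - 1 / ((1 - 2 * (c * e ^ 2)) * e)
      ≤ -2 * e * (c - 4 * L ^ 2 - g * e / (6 * k ^ 3)) := by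
  have hmom : 1 / e + 2 * c * e ≤ 1 / ((1 - 2 * (c * e ^ 2)) * e) := by
    calc 1 / e + 2 * c * e = (1 + 2 * (c * e ^ 2)) / e := by field_simp
      _ ≤ 1 / (1 - 2 * (c * e ^ 2)) / e := by gcongr; exact one_add_le_one_div_one_sub (by linarith)
      _ = 1 / ((1 - 2 * (c * e ^ 2)) * e) := by rw [div_div]
  have hL : 8 * L ^ 2 * f ≤ 8 * L ^ 2 * e := by gcongr
  have hrhs : -2 * e * (c - 4 * L ^ 2 - g * e / (6 * k ^ 3))
      = 8 * L ^ 2 * e - 2 * c * e + g * e ^ 2 / (3 * k ^ 3) := by ring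
  linarith

theorem alpha_bound_le_of_le_one {L k c g e : ℝ} (hk : 0 < k) (hg : 0 ≤ g) (he : 0 < e) (he1 : e ≤ 1) :
    -2 * e * (c - 4 * L ^ 2 - g * e / (6 * k ^ 3)) ≤ -2 * e * (c - 4 * L ^ 2 - g / (6 * k ^ 3)) := by
  have : g * e / (6 * k ^ 3) ≤ g / (6 * k ^ 3) := by gcongr; exact mul_le_of_le_one_right hg he1
  nlinarith

theorem alpha_negativity_general (L Gb kbar c w : ℝ)
    (hk : 0 < kbar) (hw : 0 < w)
    (G : ℕ → ℝ) (hGnn : ∀ t, 1 ≤ t → 0 ≤ G t) (hGle : ∀ t, 1 ≤ t → G t ≤ Gb)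
    (η : ℕ → ℝ) (hη0 : η 0 = kbar / w ^ ((1 : ℝ) / 3))
    (hηt : ∀ t, 1 ≤ t →
      η t = kbar / (w + ∑ i ∈ Finset.Icc 1 t, (G i) ^ 2) ^ ((1 : ℝ) / 3))
    (β : ℕ → ℝ) (hβ : ∀ t, 1 ≤ t → β t = c * (η (t - 1)) ^ 2)
    (hβlt : ∀ t, 1 ≤ t → β t < 1 / 2)
    (t : ℕ) (ht : 1 ≤ t) :
    (8 * L ^ 2 * η t + 1 / η t - 1 / ((1 - 2 * β t) * η (t - 1))
        ≤ -2 * η (t - 1) * (c - 4 * L ^ 2 - Gb ^ 2 * η (t - 1) / (6 * kbar ^ 3)))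
    ∧ (η (t - 1) ≤ 1 → c > 4 * L ^ 2 + Gb ^ 2 / (6 * kbar ^ 3) →
        (8 * L ^ 2 * η t + 1 / η t - 1 / ((1 - 2 * β t) * η (t - 1))
            ≤ -2 * η (t - 1) * (c - 4 * L ^ 2 - Gb ^ 2 / (6 * kbar ^ 3)))
        ∧ -2 * η (t - 1) * (c - 4 * L ^ 2 - Gb ^ 2 / (6 * kbar ^ 3)) < 0) := by
  obtain ⟨s, rfl⟩ : ∃ s, t = s + 1 := ⟨t - 1, by omega⟩
  simp only [Nat.add_sub_cancel]
  set A := w + ∑ i ∈ Finset.Icc 1 s, G i ^ 2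
  have hA : 0 < A := by positivity
  have hηs : η s = cbrtStep kbar A := by
    rcases Nat.eq_zero_or_pos s with rfl | hs
    · simpa [A, cbrtStep] using hη0
    · exact hηt s hs
  have hηs1 : η (s + 1) = cbrtStep kbar (A + G (s + 1) ^ 2) := by
    rw [hηt _ le_add_self, Finset.sum_Icc_succ_top le_add_self, ← add_assoc]; rfl
  have hGsq : G (s + 1) ^ 2 ≤ Gb ^ 2 := pow_le_pow_left₀ (hGnn _ le_add_self) (hGle _ le_add_self) 2
  have he : 0 < η s := hηs ▸ cbrtStep_pos hk hA
  have hinv : 1 / η (s + 1) - 1 / η s ≤ Gb ^ 2 * η s ^ 2 / (3 * kbar ^ 3) := by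
    rw [hηs, hηs1]
    refine (one_div_cbrtStep_sub_one_div_cbrtStep_le hk hA (by positivity)).trans ?_
    rw [add_sub_cancel_left]; gcongr
  have hfe : η (s + 1) ≤ η s := by
    rw [hηs, hηs1]; exact cbrtStep_anti hk.le hA (le_add_of_nonneg_right (sq_nonneg _))
  have hβs : β (s + 1) = c * η s ^ 2 := hβ (s + 1) le_add_self
  have hα := alpha_le (L := L) he hfe hinv (hβs ▸ hβlt _ le_add_self)
  rw [hβs]
  refine ⟨hα, fun he1 hc => ⟨hα.trans (alpha_bound_le_of_le_one hk (sq_nonneg Gb) he he1), ?_⟩⟩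
  exact mul_neg_of_neg_of_pos (by linarith) (by linarith)

/-- Negativity of the coefficient α_t in the proof of Theorem 1. -/
theorem alpha_negativity (L Gb kbar c w : ℝ)
    (hL : 0 < L) (hGb : 0 < Gb) (hk : 0 < kbar) (hc : 0 < c) (hw : 0 < w)
    (G : ℕ → ℝ) (hGnn : ∀ t, 1 ≤ t → 0 ≤ G t) (hGle : ∀ t, 1 ≤ t → G t ≤ Gb)
    (η : ℕ → ℝ) (hη0 : η 0 = kbar / w ^ ((1 : ℝ) / 3))
    (hηt : ∀ t, 1 ≤ t →
      η t = kbar / (w + ∑ i ∈ Finset.Icc 1 t, (G i) ^ 2) ^ ((1 : ℝ) / 3))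
    (β : ℕ → ℝ) (hβ : ∀ t, 1 ≤ t → β t = c * (η (t - 1)) ^ 2)
    (hβlt : ∀ t, 1 ≤ t → β t < 1 / 2)
    (t : ℕ) (ht : 1 ≤ t) :
    (8 * L ^ 2 * η t + 1 / η t - 1 / ((1 - 2 * β t) * η (t - 1))
        ≤ -2 * η (t - 1) * (c - 4 * L ^ 2 - Gb ^ 2 * η (t - 1) / (6 * kbar ^ 3)))
    ∧ (η (t - 1) ≤ 1 → c > 4 * L ^ 2 + Gb ^ 2 / (6 * kbar ^ 3) →
        (8 * L ^ 2 * η t + 1 / η t - 1 / ((1 - 2 * β t) * η (t - 1))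
            ≤ -2 * η (t - 1) * (c - 4 * L ^ 2 - Gb ^ 2 / (6 * kbar ^ 3)))
        ∧ -2 * η (t - 1) * (c - 4 * L ^ 2 - Gb ^ 2 / (6 * kbar ^ 3)) < 0) :=
  alpha_negativity_general L Gb kbar c w hk hw G hGnn hGle η hη0 hηt β hβ hβlt t ht
end
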